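/- Let Θ = [F₁^T, …, F_M^T]^T ∈ ℂ^{MN×(M−1)} where F_t = c_t·Q·[φ_{2,t},…,φ_{M,t}] with c_t ≠ 0, Q ∈ ℂ^{N×M} of rank q ≥ 1, and for each t the vectors φ_{2,t},…,φ_{M,t} ∈ ℂ^M are linearly independent. Then there exists a choice of the vectors φ_{m,t} (forming columns of unitary matrices) such that rank(Θ) = M − 1. -/

import Mathlib

/-!
Let `u` be the unit vector along the conjugate of a nonzero row `Qₙ` of `Q`, and for each `t`
take `Φ_t` unitary with `t`-th column `u`. If `Θ x = 0`, put `z = (0, x)`; then `Q Φ_t z = 0`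
for every `t`, and `z_t = uᴴ Φ_t z` is a multiple of `(Q Φ_t z)ₙ = 0`. Hence `z = 0`: the
`M - 1` columns of `Θ` are linearly independent.
-/

open Matrix

theorem apply_eq_star_dotProduct_mulVec_of_col_eq {𝕜 ι : Type*} [CommSemiring 𝕜] [StarRing 𝕜]
    [Fintype ι] [DecidableEq ι] {U : Matrix ι ι 𝕜} (hU : Uᴴ * U = 1) {u : ι → 𝕜} {t : ι}
    (hcol : ∀ i, U i t = u i) (z : ι → 𝕜) :
    z t = star u ⬝ᵥ (U *ᵥ z) := by
  conv_lhs => rw [← one_mulVec z, ← hU, ← mulVec_mulVec]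
  simp [mulVec, dotProduct, conjTranspose_apply, hcol]

section Unitary

variable {𝕜 ι : Type*} [RCLike 𝕜] [Fintype ι] [DecidableEq ι]

theorem exists_mem_unitaryGroup_col_eq {u : EuclideanSpace 𝕜 ι} (hu : ‖u‖ = 1) (t : ι) :
    ∃ U ∈ unitaryGroup ι 𝕜, ∀ i, U i t = u i := by
  have hon : Orthonormal 𝕜 (({t} : Set ι).domRestrict fun _ => u) :=
    orthonormal_subsingleton_iff.mpr fun _ => hu
  obtain ⟨b, hb⟩ := hon.exists_orthonormalBasis_extension_of_card_eq (by simp)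
  refine ⟨_, (EuclideanSpace.basisFun ι 𝕜).toMatrix_orthonormalBasis_mem_unitary b, fun i => ?_⟩
  simp [Module.Basis.toMatrix_apply, hb t rfl]

theorem exists_mem_unitaryGroup_apply_eq_zero_of_mulVec_eq_zero {ν : Type*} {Q : Matrix ν ι 𝕜}
    (hQ : Q ≠ 0) (t : ι) :
    ∃ U ∈ unitaryGroup ι 𝕜, ∀ z, Q *ᵥ (U *ᵥ z) = 0 → z t = 0 := by
  obtain ⟨n, hn⟩ : ∃ n, Q n ≠ 0 := Function.ne_iff.mp hQ
  set r : EuclideanSpace 𝕜 ι := WithLp.toLp 2 (star (Q n))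
  have hr : r ≠ 0 := fun h => hn (by simpa [r] using congrArg WithLp.ofLp h)
  obtain ⟨U, hU, hcol⟩ := exists_mem_unitaryGroup_col_eq (norm_smul_inv_norm (𝕜 := 𝕜) hr) t
  refine ⟨U, hU, fun z hz => ?_⟩
  have hrow : Q n ⬝ᵥ (U *ᵥ z) = 0 := congrFun hz n
  rw [apply_eq_star_dotProduct_mulVec_of_col_eq hU.1 hcol z]
  simp [r, hrow]

end Unitary

theorem mulVec_injective_of_stacked_smul_mul {𝕜 ι ν τ : Type*} [Field 𝕜] [Fintype ι]
    {Q : Matrix ν ι 𝕜} {c : τ → 𝕜} (hc : ∀ t, c t ≠ 0) {Φ : τ → Matrix ι ι 𝕜}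
    (h : ∀ z, (∀ t, Q *ᵥ (Φ t *ᵥ z) = 0) → z = 0) :
    Function.Injective (of fun (p : τ × ν) j => (c p.1 • (Q * Φ p.1)) p.2 j).mulVec := by
  refine (injective_iff_map_eq_zero (mulVecLin _)).mpr fun z hz => h z fun t => funext fun n => ?_
  have hblock : (c t • (Q * Φ t)) *ᵥ z = c t • Q *ᵥ (Φ t *ᵥ z) := by
    rw [smul_mulVec, mulVec_mulVec]
  exact (mul_eq_zero.mp ((congrFun hblock n).symm.trans (congrFun hz (t, n)))).resolve_left (hc t)

theorem rank_submatrix_id_of_linearIndependent_col {R m n κ : Type*} [Field R] [Fintype κ]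
    {A : Matrix m n R} (hA : LinearIndependent R A.col) {e : κ → n} (he : Function.Injective e) :
    (A.submatrix id e).rank = Fintype.card κ := by
  rw [rank_eq_finrank_span_cols]
  exact finrank_span_eq_card (hA.comp e he)

/-- There exist unitary BD-RIS scattering matrices (whose columns `2,…,M` give the
vectors `φ_{m,t}`) such that the stacked matrix `Θ = [F₁ᵀ,…,F_Mᵀ]ᵀ`,
with `F_t = c_t • Q [φ_{2,t},…,φ_{M,t}]`, has rank `M - 1`. -/
theorem stmt_9 (N M q : ℕ) (hq : 1 ≤ q)
    (Q : Matrix (Fin N) (Fin M) ℂ) (hQ : Q.rank = q)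
    (c : Fin M → ℂ) (hc : ∀ t, c t ≠ 0) :
    ∃ Φ : Fin M → Matrix (Fin M) (Fin M) ℂ,
      (∀ t, (Φ t)ᴴ * Φ t = 1) ∧ (∀ t, Φ t * (Φ t)ᴴ = 1) ∧
      (Matrix.of fun (p : Fin M × Fin N) (j : Fin (M - 1)) =>
        (c p.1 • (Q * Matrix.of (fun i (j' : Fin (M - 1)) =>
          Φ p.1 i ⟨j'.1 + 1, by omega⟩))) p.2 j).rank = M - 1 := by
  have hQ0 : Q ≠ 0 := by
    rintro rfl
    rw [rank_zero] at hQ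
    omega
  choose Φ hΦ hker using exists_mem_unitaryGroup_apply_eq_zero_of_mulVec_eq_zero hQ0
  refine ⟨Φ, fun t => (hΦ t).1, fun t => (hΦ t).2, ?_⟩
  have hinj : Function.Injective
      (of fun (p : Fin M × Fin N) j => (c p.1 • (Q * Φ p.1)) p.2 j).mulVec :=
    mulVec_injective_of_stacked_smul_mul hc fun z hz => funext fun t => hker t z (hz t)
  have hsucc : Function.Injective fun j : Fin (M - 1) => (⟨j.1 + 1, by omega⟩ : Fin M) :=
    fun i j hij => Fin.ext (by simpa using congrArg Fin.val hij)
  -- `Θ` is, definitionally, the submatrix of columns `2, …, M` of the stacked `c_t • Q Φ_t`.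
  exact (rank_submatrix_id_of_linearIndependent_col (mulVec_injective_iff.mp hinj) hsucc).trans
    (Fintype.card_fin _)
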